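/- Let U be a real p×m matrix with orthonormal columns (UᵀU = I_m), S a diagonal m×m matrix with strictly positive diagonal entries, H = U S^{1/2} with columns h₁, …, h_m, D a diagonal m×m matrix with nonnegative diagonal entries, σ > 0, T = S^{−1/2} Uᵀ, and let K₁, …, K_m be symmetric positive-semidefinite n×n matrices. Identify a p×n matrix Y with the vector in ℝ^{pn} obtained by stacking its rows, and define the pn×pn matrix C = Σ_{i=1}^m (h_i h_iᵀ) ⊗ K_i + (σ² I_p + H D Hᵀ) ⊗ I_n. Then C is positive definite, and for every p×n matrix Y the Gaussian log-density satisfies ℓ(vec(Y); C) = −(n/2) log det S − (n(p−m)/2) log(2πσ²) − (1/(2σ²)) (‖Y‖_F² − ‖Uᵀ Y‖_F²) + Σ_{i=1}^m ℓ((T Y)_{i:}; K_i + (σ²/S_{ii} + D_{ii}) I_n), where (T Y)_{i:} ∈ ℝ^n is the i-th row of T Y. -/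

import Mathlib

open Matrix Kronecker

section aux
set_option linter.unusedSectionVars false
variable {ι κ : Type*} [Fintype ι] [Fintype κ] [DecidableEq ι] [DecidableEq κ]

lemma aux_conj_eq (e : ι ≃ κ) (Q : Matrix κ ι ℝ) (B : Matrix ι ι ℝ) :
    Q * B * Qᵀ = (Q.submatrix id e.symm) * (B.submatrix e.symm e.symm) * (Qᵀ.submatrix e.symm id) := by
  rw [Matrix.submatrix_mul_equiv, Matrix.submatrix_mul_equiv, Matrix.submatrix_id_id]

lemma aux_conj_det (e : ι ≃ κ) (Q : Matrix κ ι ℝ) (hQ : Q * Qᵀ = 1) (B : Matrix ι ι ℝ) :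
    (Q * B * Qᵀ).det = B.det := by
  rw [aux_conj_eq e Q B]
  have hq : (Q.submatrix id e.symm) * (Qᵀ.submatrix e.symm id) = 1 := by
    rw [Matrix.submatrix_mul_equiv, Matrix.submatrix_id_id, hQ]
  rw [Matrix.det_mul, Matrix.det_mul, Matrix.det_submatrix_equiv_self, mul_right_comm,
    ← Matrix.det_mul, hq, Matrix.det_one, one_mul]

lemma aux_quad_bd {n : ℕ} (M : ι → Matrix (Fin n) (Fin n) ℝ) (x : ι × Fin n → ℝ) :
    x ⬝ᵥ ((Matrix.blockDiagonal M).submatrix (Equiv.prodComm ι (Fin n)) (Equiv.prodComm ι (Fin n))) *ᵥ x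
      = ∑ k, (fun a => x (k, a)) ⬝ᵥ (M k) *ᵥ (fun a => x (k, a)) := by
  simp only [dotProduct, Matrix.mulVec, Matrix.submatrix_apply, Equiv.prodComm_apply,
    Matrix.blockDiagonal_apply, Fintype.sum_prod_type, Prod.swap_prod_mk]
  refine Finset.sum_congr rfl fun k _ => Finset.sum_congr rfl fun a _ => ?_
  congr 1
  rw [Finset.sum_comm]
  simp [ite_mul]

lemma aux_bd_det {n : ℕ} (M : ι → Matrix (Fin n) (Fin n) ℝ) :
    ((Matrix.blockDiagonal M).submatrix (Equiv.prodComm ι (Fin n)) (Equiv.prodComm ι (Fin n))).det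
      = ∏ k, (M k).det := by
  rw [Matrix.det_submatrix_equiv_self, Matrix.det_blockDiagonal]

lemma aux_bd_mul {n : ℕ} (M N : ι → Matrix (Fin n) (Fin n) ℝ) :
    ((Matrix.blockDiagonal M).submatrix (Equiv.prodComm ι (Fin n)) (Equiv.prodComm ι (Fin n))) *
      ((Matrix.blockDiagonal N).submatrix (Equiv.prodComm ι (Fin n)) (Equiv.prodComm ι (Fin n)))
      = ((Matrix.blockDiagonal (fun k => M k * N k)).submatrix (Equiv.prodComm ι (Fin n)) (Equiv.prodComm ι (Fin n))) := by
  rw [Matrix.submatrix_mul_equiv, Matrix.blockDiagonal_mul]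

lemma aux_bd_one {n : ℕ} :
    ((Matrix.blockDiagonal (fun _ : ι => (1 : Matrix (Fin n) (Fin n) ℝ))).submatrix
      (Equiv.prodComm ι (Fin n)) (Equiv.prodComm ι (Fin n))) = 1 := by
  have h : (fun _ : ι => (1 : Matrix (Fin n) (Fin n) ℝ)) = 1 := rfl
  rw [h, Matrix.blockDiagonal_one, Matrix.submatrix_one_equiv]

lemma aux_bd_eq_sum_kron {n : ℕ} (M : ι → Matrix (Fin n) (Fin n) ℝ) :
    ((Matrix.blockDiagonal M).submatrix (Equiv.prodComm ι (Fin n)) (Equiv.prodComm ι (Fin n)))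
      = ∑ k, (Matrix.single k k (1:ℝ)) ⊗ₖ M k := by
  ext ⟨k, a⟩ ⟨k', b⟩
  simp only [Matrix.submatrix_apply, Equiv.prodComm_apply, Prod.swap_prod_mk,
    Matrix.blockDiagonal_apply, Matrix.sum_apply, Matrix.kroneckerMap_apply,
    Matrix.single, Matrix.of_apply]
  rcases eq_or_ne k k' with h | h
  · subst h
    simp [Finset.sum_ite_eq, ite_and]
  · simp [h, ite_and, Finset.sum_ite_eq]

lemma aux_conj_single (Q : Matrix κ ι ℝ) (k : ι) :
    Q * Matrix.single k k (1:ℝ) * Qᵀ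
      = vecMulVec (fun a => Q a k) (fun a => Q a k) := by
  ext a b
  simp [Matrix.mul_apply, Matrix.single, Matrix.vecMulVec_apply, ite_and,
    Finset.sum_ite_eq, Finset.mul_sum]

lemma aux_kron_conj {n : ℕ} (Q : Matrix κ ι ℝ) (M : ι → Matrix (Fin n) (Fin n) ℝ) :
    (Q ⊗ₖ (1 : Matrix (Fin n) (Fin n) ℝ)) *
      ((Matrix.blockDiagonal M).submatrix (Equiv.prodComm ι (Fin n)) (Equiv.prodComm ι (Fin n))) *
      (Qᵀ ⊗ₖ (1 : Matrix (Fin n) (Fin n) ℝ))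
      = ∑ k, (vecMulVec (fun a => Q a k) (fun a => Q a k)) ⊗ₖ M k := by
  rw [aux_bd_eq_sum_kron, Matrix.mul_sum, Matrix.sum_mul]
  refine Finset.sum_congr rfl fun k _ => ?_
  rw [← Matrix.mul_kronecker_mul, ← Matrix.mul_kronecker_mul, Matrix.one_mul, Matrix.mul_one,
    aux_conj_single]

lemma aux_ct (M : Matrix ι κ ℝ) : Mᴴ = Mᵀ :=
  Matrix.ext fun _ _ => star_trivial _

lemma aux_orth_norm (Q : Matrix κ ι ℝ) (hQ : Q * Qᵀ = 1) (y : κ → ℝ) :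
    ∑ k, (∑ b, Q b k * y b) ^ 2 = ∑ b, (y b) ^ 2 := by
  have h : ∀ b c, ∑ k, Q b k * Q c k = if b = c then (1:ℝ) else 0 := fun b c => by
    have := congrFun (congrFun hQ b) c
    simpa [Matrix.mul_apply, Matrix.one_apply] using this
  calc ∑ k, (∑ b, Q b k * y b) ^ 2
      = ∑ k, ∑ b, ∑ c, (Q b k * y b) * (Q c k * y c) := by
        refine Finset.sum_congr rfl fun k _ => ?_
        rw [pow_two, Finset.sum_mul_sum]
    _ = ∑ b, ∑ c, (∑ k, Q b k * Q c k) * (y b * y c) := by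
        rw [Finset.sum_comm]
        refine Finset.sum_congr rfl fun b _ => ?_
        rw [Finset.sum_comm]
        refine Finset.sum_congr rfl fun c _ => ?_
        rw [Finset.sum_mul]
        exact Finset.sum_congr rfl fun k _ => by ring
    _ = ∑ b, (y b) ^ 2 := by
        simp [h, ite_mul, zero_mul, pow_two]

end aux

/-- `ℓ(z; M) = −(k/2) log(2π) − ½ log det M − ½ zᵀ M⁻¹ z`, the log-density of the centered
Gaussian with covariance `M` at `z`. -/
noncomputable def gaussLogDensity {k : Type*} [Fintype k] [DecidableEq k]
    (z : k → ℝ) (M : Matrix k k ℝ) : ℝ :=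
  -(Fintype.card k : ℝ) / 2 * Real.log (2 * Real.pi) - 1 / 2 * Real.log M.det -
    1 / 2 * (z ⬝ᵥ M⁻¹.mulVec z)

set_option maxHeartbeats 1600000 in
/-- the OILMM log-marginal-likelihood decomposition. With
`C = Σᵢ (hᵢhᵢᵀ) ⊗ Kᵢ + (σ²I + HDHᵀ) ⊗ Iₙ`, `C` is positive definite and the Gaussian
log-density of the (row-)vectorised data `Y` under `C` decomposes into a regularisation term
plus the log-densities of the `m` projected single-output problems. -/
theorem stmt_12 {p m n : ℕ} (U : Matrix (Fin p) (Fin m) ℝ) (s d : Fin m → ℝ) (σ : ℝ)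
    (hU : Uᵀ * U = 1) (hs : ∀ i, 0 < s i) (hd : ∀ i, 0 ≤ d i) (hσ : 0 < σ)
    (H : Matrix (Fin p) (Fin m) ℝ)
    (hH : H = U * Matrix.diagonal (fun i => Real.sqrt (s i)))
    (T : Matrix (Fin m) (Fin p) ℝ)
    (hT : T = Matrix.diagonal (fun i => (Real.sqrt (s i))⁻¹) * Uᵀ)
    (K : Fin m → Matrix (Fin n) (Fin n) ℝ) (hK : ∀ i, (K i).PosSemidef)
    (C : Matrix (Fin p × Fin n) (Fin p × Fin n) ℝ)
    (hC : C = (∑ i : Fin m, (vecMulVec (fun a => H a i) (fun b => H b i)) ⊗ₖ K i) +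
      (σ ^ 2 • (1 : Matrix (Fin p) (Fin p) ℝ) + H * Matrix.diagonal d * Hᵀ) ⊗ₖ
        (1 : Matrix (Fin n) (Fin n) ℝ)) :
    C.PosDef ∧
      ∀ Y : Matrix (Fin p) (Fin n) ℝ,
        gaussLogDensity (fun q : Fin p × Fin n => Y q.1 q.2) C =
          -(n : ℝ) / 2 * Real.log (Matrix.diagonal s).det -
            (n : ℝ) * ((p : ℝ) - (m : ℝ)) / 2 * Real.log (2 * Real.pi * σ ^ 2) -
            1 / (2 * σ ^ 2) *
              ((∑ i, ∑ j, Y i j ^ 2) - ∑ i, ∑ j, (Uᵀ * Y) i j ^ 2) +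
            ∑ i : Fin m,
              gaussLogDensity ((T * Y) i)
                (K i + (σ ^ 2 / s i + d i) • (1 : Matrix (Fin n) (Fin n) ℝ)) := by
  classical
  -- orthonormal columns of U
  set u : Fin m → EuclideanSpace ℝ (Fin p) := fun i => WithLp.toLp 2 (fun a => U a i) with hu_def
  have hu : Orthonormal ℝ u := by
    rw [orthonormal_iff_ite]
    intro i j
    have h := congrFun (congrFun hU i) j
    simp [Matrix.mul_apply, Matrix.one_apply] at h
    simpa [PiLp.inner_apply, RCLike.inner_apply, hu_def, mul_comm] using h
  have hmp : m ≤ p := by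
    simpa [finrank_euclideanSpace_fin] using hu.linearIndependent.fintype_card_le_finrank
  -- the orthogonal complement basis
  set Kspan := Submodule.span ℝ (Set.range u) with hK_def
  have hfr : Module.finrank ℝ (Kspanᗮ) = p - m := by
    have h1 : Module.finrank ℝ Kspan = m := by
      simpa using finrank_span_eq_card hu.linearIndependent
    have h2 := Submodule.finrank_add_finrank_orthogonal (K := Kspan)
    rw [h1, finrank_euclideanSpace_fin] at h2
    omega
  set b := (stdOrthonormalBasis ℝ (↥Kspanᗮ)).reindex (finCongr hfr) with hb_def
  set v : Fin (p - m) → EuclideanSpace ℝ (Fin p) := fun j => (b j : EuclideanSpace ℝ (Fin p)) with hv_def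
  have hv : Orthonormal ℝ v := by
    rw [orthonormal_iff_ite]
    intro i j
    have hb2 := b.orthonormal
    rw [orthonormal_iff_ite] at hb2
    simpa [hv_def, Submodule.coe_inner] using hb2 i j
  have huv : ∀ i j, (inner ℝ (u i) (v j) : ℝ) = 0 := by
    intro i j
    have hmem : (b j : EuclideanSpace ℝ (Fin p)) ∈ Kspanᗮ := (b j).2
    have := (Submodule.mem_orthogonal Kspan _).mp hmem (u i) (Submodule.subset_span ⟨i, rfl⟩)
    simpa [hv_def] using this
  -- the combined orthogonal matrix Q
  set Q : Matrix (Fin p) (Fin m ⊕ Fin (p - m)) ℝ :=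
    Matrix.of (fun a k => Sum.elim (fun i => U a i) (fun j => v j a) k) with hQ_def
  have hQtQ : Qᵀ * Q = 1 := by
    ext i j
    simp only [Matrix.mul_apply, Matrix.transpose_apply, Matrix.of_apply, hQ_def]
    rcases i with i | i <;> rcases j with j | j
    · have h := congrFun (congrFun hU i) j
      simpa [Matrix.mul_apply, Matrix.one_apply] using h
    · have := huv i j
      rw [real_inner_comm] at this
      simpa [PiLp.inner_apply, RCLike.inner_apply, hu_def, Matrix.one_apply] using this
    · have := huv j i
      have h2 : (inner ℝ (v i) (u j) : ℝ) = 0 := by rw [real_inner_comm]; exact this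
      simpa [PiLp.inner_apply, RCLike.inner_apply, hu_def, Matrix.one_apply] using this
    · have := (orthonormal_iff_ite.mp hv) i j
      rw [real_inner_comm] at this
      simpa [PiLp.inner_apply, RCLike.inner_apply, Matrix.one_apply] using this
  have esum : (Fin m ⊕ Fin (p - m)) ≃ Fin p :=
    finSumFinEquiv.trans (finCongr (by omega))
  have hQQt : Q * Qᵀ = 1 := (Matrix.mul_eq_one_comm_of_equiv esum.symm).mpr hQtQ
  -- the block matrices
  set A : Fin m → Matrix (Fin n) (Fin n) ℝ :=
    fun i => s i • K i + (σ ^ 2 + s i * d i) • 1 with hA_def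
  have hA : ∀ i, (A i).PosDef := by
    intro i
    have h1 : (s i • K i).PosSemidef := by
      refine Matrix.PosSemidef.of_dotProduct_mulVec_nonneg ?_ fun x => ?_
      · unfold Matrix.IsHermitian
        rw [Matrix.conjTranspose_smul, (hK i).1]
        simp
      · rw [Matrix.smul_mulVec, dotProduct_smul]
        exact smul_nonneg (hs i).le ((hK i).dotProduct_mulVec_nonneg x)
    have h2 : ((σ ^ 2 + s i * d i) • (1 : Matrix (Fin n) (Fin n) ℝ)).PosDef := by
      rw [Matrix.smul_one_eq_diagonal]
      refine Matrix.posDef_diagonal_iff.mpr fun j => ?_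
      exact add_pos_of_pos_of_nonneg (pow_pos hσ 2) (mul_nonneg (hs i).le (hd i))
    exact Matrix.PosDef.posSemidef_add h1 h2
  set Bf : (Fin m ⊕ Fin (p - m)) → Matrix (Fin n) (Fin n) ℝ :=
    Sum.elim A (fun _ => σ ^ 2 • 1) with hBf_def
  have hs1pd : ((σ:ℝ) ^ 2 • (1 : Matrix (Fin n) (Fin n) ℝ)).PosDef := by
    rw [Matrix.smul_one_eq_diagonal]
    exact Matrix.posDef_diagonal_iff.mpr fun j => pow_pos hσ 2
  have hBf : ∀ k, (Bf k).PosDef := by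
    rintro (i | j)
    · exact hA i
    · exact hs1pd
  set B : Matrix ((Fin m ⊕ Fin (p - m)) × Fin n) ((Fin m ⊕ Fin (p - m)) × Fin n) ℝ :=
    (Matrix.blockDiagonal Bf).submatrix (Equiv.prodComm _ _) (Equiv.prodComm _ _) with hB_def
  -- decomposition of C as a sum of Kronecker products
  have hCsum : C = ∑ k, (vecMulVec (fun a => Q a k) (fun a => Q a k)) ⊗ₖ Bf k := by
    have hQQ' : ∀ a c, (∑ i, U a i * U c i) + (∑ j, v j a * v j c)
        = if a = c then (1:ℝ) else 0 := by
      intro a c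
      have h := congrFun (congrFun hQQt a) c
      simpa [Matrix.mul_apply, Fintype.sum_sum_type, hQ_def, Matrix.one_apply] using h
    have hHe : ∀ a i, H a i = U a i * Real.sqrt (s i) := by
      intro a i; rw [hH, Matrix.mul_diagonal]
    ext ⟨a, x⟩ ⟨c, y⟩
    have key := hQQ' a c
    simp only [hC, Matrix.add_apply, Matrix.sum_apply, Matrix.kroneckerMap_apply,
      Matrix.smul_apply, Matrix.vecMulVec_apply, Matrix.one_apply, Matrix.mul_apply,
      Matrix.mul_diagonal, Matrix.transpose_apply, Fintype.sum_sum_type, hQ_def,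
      Sum.elim_inl, Sum.elim_inr, Matrix.of_apply, hHe, smul_eq_mul, hBf_def, hA_def,
      Matrix.diagonal_apply, mul_ite, mul_zero, ite_mul, zero_mul, Finset.sum_ite_eq,
      Finset.sum_ite_eq', Finset.mem_univ, if_true]
    have hss : ∀ i, Real.sqrt (s i) * Real.sqrt (s i) = s i := fun i => Real.mul_self_sqrt (hs i).le
    have kv : ∑ j : Fin (p - m), v j a * v j c
        = (if a = c then (1:ℝ) else 0) - ∑ i, U a i * U c i := by rw [← key]; ring
    rcases eq_or_ne x y with rfl | hxy
    · simp only [if_pos rfl, mul_one, if_true, eq_self_iff_true]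
      have h2 : ∑ j : Fin (p - m), v j a * v j c * σ ^ 2
          = ((if a = c then (1:ℝ) else 0) - ∑ i, U a i * U c i) * σ ^ 2 := by
        rw [← kv, Finset.sum_mul]
      have h3 : ∑ i, U a i * U c i * (s i * K i x x + (σ ^ 2 + s i * d i))
          = (∑ i, U a i * Real.sqrt (s i) * (U c i * Real.sqrt (s i)) * K i x x)
            + ((∑ i, U a i * Real.sqrt (s i) * d i * (U c i * Real.sqrt (s i)))
            + σ ^ 2 * ∑ i, U a i * U c i) := by
        simp only [Finset.mul_sum, ← Finset.sum_add_distrib]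
        refine Finset.sum_congr rfl fun i _ => ?_
        linear_combination (-(U a i * U c i * K i x x) - U a i * U c i * d i) * hss i
      have hdd : (if a = c then σ ^ 2 else 0) = σ ^ 2 * (if a = c then (1:ℝ) else 0) := by
        split <;> simp
      linear_combination -h3 - h2 + hdd
    · simp only [if_neg hxy, mul_zero, add_zero, Finset.sum_const_zero]
      refine Finset.sum_congr rfl fun i _ => ?_
      linear_combination (U a i * U c i * K i x y) * hss i
  have hCB : C = (Q ⊗ₖ (1 : Matrix (Fin n) (Fin n) ℝ)) * B * (Qᵀ ⊗ₖ (1 : Matrix (Fin n) (Fin n) ℝ)) := by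
    rw [hCsum, hB_def, aux_kron_conj]
  -- basic Kronecker facts
  have hkt : (Q ⊗ₖ (1 : Matrix (Fin n) (Fin n) ℝ))ᵀ = Qᵀ ⊗ₖ (1 : Matrix (Fin n) (Fin n) ℝ) := by
    rw [← Matrix.kroneckerMap_transpose, Matrix.transpose_one]
  have hkt2 : (Qᵀ ⊗ₖ (1 : Matrix (Fin n) (Fin n) ℝ))ᵀ = Q ⊗ₖ (1 : Matrix (Fin n) (Fin n) ℝ) := by
    rw [← Matrix.kroneckerMap_transpose, Matrix.transpose_transpose, Matrix.transpose_one]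
  have hKQ1 : (Q ⊗ₖ (1 : Matrix (Fin n) (Fin n) ℝ)) * (Qᵀ ⊗ₖ (1 : Matrix (Fin n) (Fin n) ℝ)) = 1 := by
    rw [← Matrix.mul_kronecker_mul, hQQt, Matrix.one_mul, Matrix.one_kronecker_one]
  have hKQ2 : (Qᵀ ⊗ₖ (1 : Matrix (Fin n) (Fin n) ℝ)) * (Q ⊗ₖ (1 : Matrix (Fin n) (Fin n) ℝ)) = 1 := by
    rw [← Matrix.mul_kronecker_mul, hQtQ, Matrix.one_mul, Matrix.one_kronecker_one]
  -- B is positive definite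
  have hBherm : B.IsHermitian := by
    unfold Matrix.IsHermitian
    rw [hB_def, Matrix.conjTranspose_submatrix, Matrix.blockDiagonal_conjTranspose]
    have hfe : (fun k => (Bf k)ᴴ) = Bf := funext fun k => (hBf k).1
    rw [hfe]
  have hBpd : B.PosDef := by
    refine Matrix.PosDef.of_dotProduct_mulVec_pos hBherm fun x hx => ?_
    have hst : star x = x := by funext a; exact star_trivial _
    rw [hst, hB_def, aux_quad_bd]
    obtain ⟨⟨k0, a0⟩, hka⟩ : ∃ ka, x ka ≠ 0 := by
      by_contra h
      push_neg at h
      exact hx (funext h)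
    refine Finset.sum_pos' (fun k _ => ?_) ⟨k0, Finset.mem_univ _, ?_⟩
    · have := (hBf k).posSemidef.dotProduct_mulVec_nonneg (fun a => x (k, a))
      simpa using this
    · have := (hBf k0).dotProduct_mulVec_pos (x := fun a => x (k0, a)) (fun hzero => hka (congrFun hzero a0))
      simpa using this
  -- C is positive definite
  have hCherm : C.IsHermitian := by
    unfold Matrix.IsHermitian
    rw [hCB, Matrix.conjTranspose_mul, Matrix.conjTranspose_mul,
      aux_ct (Qᵀ ⊗ₖ (1 : Matrix (Fin n) (Fin n) ℝ)), aux_ct (Q ⊗ₖ (1 : Matrix (Fin n) (Fin n) ℝ)),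
      hkt2, hkt, hBherm.eq, Matrix.mul_assoc]
  have hCpd : C.PosDef := by
    refine Matrix.PosDef.of_dotProduct_mulVec_pos hCherm fun x hx => ?_
    have hst : star x = x := by funext a; exact star_trivial _
    rw [hst, hCB]
    have hy : x ⬝ᵥ ((Q ⊗ₖ (1 : Matrix (Fin n) (Fin n) ℝ)) * B * (Qᵀ ⊗ₖ (1 : Matrix (Fin n) (Fin n) ℝ))) *ᵥ x
        = ((Qᵀ ⊗ₖ (1 : Matrix (Fin n) (Fin n) ℝ)) *ᵥ x) ⬝ᵥ B *ᵥ ((Qᵀ ⊗ₖ (1 : Matrix (Fin n) (Fin n) ℝ)) *ᵥ x) := by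
      rw [Matrix.mul_assoc, ← Matrix.mulVec_mulVec, Matrix.dotProduct_mulVec, ← Matrix.mulVec_transpose, hkt,
        Matrix.mulVec_mulVec]
    rw [hy]
    have hynz : (Qᵀ ⊗ₖ (1 : Matrix (Fin n) (Fin n) ℝ)) *ᵥ x ≠ 0 := by
      intro h0
      apply hx
      have : (Q ⊗ₖ (1 : Matrix (Fin n) (Fin n) ℝ)) *ᵥ ((Qᵀ ⊗ₖ (1 : Matrix (Fin n) (Fin n) ℝ)) *ᵥ x) = x := by
        rw [Matrix.mulVec_mulVec, hKQ1, Matrix.one_mulVec]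
      rw [← this, h0, Matrix.mulVec_zero]
    have := hBpd.dotProduct_mulVec_pos hynz
    have hst2 : star ((Qᵀ ⊗ₖ (1 : Matrix (Fin n) (Fin n) ℝ)) *ᵥ x) = (Qᵀ ⊗ₖ (1 : Matrix (Fin n) (Fin n) ℝ)) *ᵥ x := by
      funext a; exact star_trivial _
    rwa [hst2] at this
  refine ⟨hCpd, fun Y => ?_⟩
  -- determinant of C
  have hdetA : ∀ i, (0:ℝ) < (A i).det := fun i => (hA i).det_pos
  have hdetB : B.det = (∏ i, (A i).det) * ((σ ^ 2) ^ n) ^ (p - m) := by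
    rw [hB_def, aux_bd_det, Fintype.prod_sum_type]
    simp [hBf_def, Matrix.det_smul]
  have hKQ1' : (Q ⊗ₖ (1 : Matrix (Fin n) (Fin n) ℝ)) * (Q ⊗ₖ (1 : Matrix (Fin n) (Fin n) ℝ))ᵀ = 1 := by
    rw [hkt]; exact hKQ1
  have hdetC : C.det = (∏ i, (A i).det) * ((σ ^ 2) ^ n) ^ (p - m) := by
    rw [hCB, ← hkt, aux_conj_det (Equiv.prodCongr esum (Equiv.refl (Fin n))) _ hKQ1' B, hdetB]
  -- inverse of C
  set Binv : Matrix ((Fin m ⊕ Fin (p - m)) × Fin n) ((Fin m ⊕ Fin (p - m)) × Fin n) ℝ :=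
    (Matrix.blockDiagonal (fun k => (Bf k)⁻¹)).submatrix (Equiv.prodComm _ _) (Equiv.prodComm _ _)
    with hBinv_def
  have hBBinv : B * Binv = 1 := by
    rw [hB_def, hBinv_def, aux_bd_mul]
    have hfe : (fun k => Bf k * (Bf k)⁻¹) = fun _ : Fin m ⊕ Fin (p - m) => (1 : Matrix (Fin n) (Fin n) ℝ) :=
      funext fun k => Matrix.mul_nonsing_inv _ (isUnit_iff_ne_zero.mpr (hBf k).det_pos.ne')
    rw [hfe, aux_bd_one]
  have hCinv : C⁻¹ = (Q ⊗ₖ (1 : Matrix (Fin n) (Fin n) ℝ)) * Binv * (Qᵀ ⊗ₖ (1 : Matrix (Fin n) (Fin n) ℝ)) := by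
    apply Matrix.inv_eq_right_inv
    rw [hCB]
    have h1 : (Qᵀ ⊗ₖ (1 : Matrix (Fin n) (Fin n) ℝ)) * ((Q ⊗ₖ (1 : Matrix (Fin n) (Fin n) ℝ)) * Binv * (Qᵀ ⊗ₖ (1 : Matrix (Fin n) (Fin n) ℝ)))
        = Binv * (Qᵀ ⊗ₖ (1 : Matrix (Fin n) (Fin n) ℝ)) := by
      rw [← Matrix.mul_assoc, ← Matrix.mul_assoc, hKQ2, Matrix.one_mul]
    rw [Matrix.mul_assoc ((Q ⊗ₖ (1 : Matrix (Fin n) (Fin n) ℝ)) * B) (Qᵀ ⊗ₖ (1 : Matrix (Fin n) (Fin n) ℝ)) _, h1,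
      Matrix.mul_assoc (Q ⊗ₖ (1 : Matrix (Fin n) (Fin n) ℝ)) B _, ← Matrix.mul_assoc B Binv _, hBBinv,
      Matrix.one_mul, hKQ1]
  -- the projected vector
  set w : (Fin m ⊕ Fin (p - m)) × Fin n → ℝ := fun ka => ∑ b, Q b ka.1 * Y b ka.2 with hw_def
  have hwx : (Qᵀ ⊗ₖ (1 : Matrix (Fin n) (Fin n) ℝ)) *ᵥ (fun q : Fin p × Fin n => Y q.1 q.2) = w := by
    funext ka
    obtain ⟨k, a⟩ := ka
    simp [Matrix.mulVec, dotProduct, Fintype.sum_prod_type, Matrix.one_apply,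
      mul_ite, mul_zero, ite_mul, zero_mul, Finset.sum_ite_eq, Finset.sum_ite_eq', hw_def]
  have hquad : (fun q : Fin p × Fin n => Y q.1 q.2) ⬝ᵥ C⁻¹ *ᵥ (fun q : Fin p × Fin n => Y q.1 q.2)
      = ∑ k, (fun a => w (k, a)) ⬝ᵥ (Bf k)⁻¹ *ᵥ (fun a => w (k, a)) := by
    rw [hCinv, Matrix.mul_assoc]
    calc (fun q : Fin p × Fin n => Y q.1 q.2) ⬝ᵥ ((Q ⊗ₖ (1 : Matrix (Fin n) (Fin n) ℝ)) * (Binv * (Qᵀ ⊗ₖ (1 : Matrix (Fin n) (Fin n) ℝ)))) *ᵥ (fun q : Fin p × Fin n => Y q.1 q.2)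
        = ((fun q : Fin p × Fin n => Y q.1 q.2) ᵥ* (Q ⊗ₖ (1 : Matrix (Fin n) (Fin n) ℝ))) ⬝ᵥ (Binv * (Qᵀ ⊗ₖ (1 : Matrix (Fin n) (Fin n) ℝ))) *ᵥ (fun q : Fin p × Fin n => Y q.1 q.2) := by
          rw [← Matrix.mulVec_mulVec, Matrix.dotProduct_mulVec]
      _ = w ⬝ᵥ Binv *ᵥ w := by
          rw [← Matrix.mulVec_mulVec, ← Matrix.mulVec_transpose, hkt, hwx]
      _ = ∑ k, (fun a => w (k, a)) ⬝ᵥ (Bf k)⁻¹ *ᵥ (fun a => w (k, a)) := by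
          rw [hBinv_def, aux_quad_bd]
  have hwl : ∀ i, (fun a => w (Sum.inl i, a)) = (Uᵀ * Y) i := by
    intro i; funext a
    simp [hw_def, hQ_def, Matrix.mul_apply]
  -- the sigma-block inverse
  have hs1inv : ((σ:ℝ) ^ 2 • (1 : Matrix (Fin n) (Fin n) ℝ))⁻¹ = (σ ^ 2)⁻¹ • 1 := by
    apply Matrix.inv_eq_right_inv
    rw [Matrix.smul_mul, Matrix.mul_smul, Matrix.one_mul, smul_smul,
      mul_inv_cancel₀ (pow_ne_zero 2 hσ.ne'), one_smul]
  have hquad_inr : ∀ j, (fun a => w (Sum.inr j, a)) ⬝ᵥ (Bf (Sum.inr j))⁻¹ *ᵥ (fun a => w (Sum.inr j, a))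
      = (σ ^ 2)⁻¹ * ∑ a, w (Sum.inr j, a) ^ 2 := by
    intro j
    have hbf : Bf (Sum.inr j) = σ ^ 2 • 1 := rfl
    rw [hbf, hs1inv, Matrix.smul_mulVec, Matrix.one_mulVec, dotProduct_smul,
      smul_eq_mul]
    congr 1
    simp [dotProduct, pow_two]
  -- norm identities
  have hnorm : ∑ k, ∑ a, w (k, a) ^ 2 = ∑ i, ∑ j, Y i j ^ 2 := by
    calc ∑ k, ∑ a, w (k, a) ^ 2 = ∑ a, ∑ k, w (k, a) ^ 2 := Finset.sum_comm
      _ = ∑ a, ∑ b, Y b a ^ 2 :=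
          Finset.sum_congr rfl fun a _ => aux_orth_norm Q hQQt (fun b => Y b a)
      _ = ∑ b, ∑ a, Y b a ^ 2 := Finset.sum_comm
  have hUnorm : ∑ i : Fin m, ∑ a, w (Sum.inl i, a) ^ 2 = ∑ i, ∑ j, (Uᵀ * Y) i j ^ 2 := by
    refine Finset.sum_congr rfl fun i _ => Finset.sum_congr rfl fun a _ => ?_
    rw [congrFun (hwl i) a]
  have hVnorm : ∑ j : Fin (p - m), ∑ a, w (Sum.inr j, a) ^ 2
      = (∑ i, ∑ j, Y i j ^ 2) - ∑ i, ∑ j, (Uᵀ * Y) i j ^ 2 := by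
    have := hnorm
    rw [Fintype.sum_sum_type] at this
    rw [hUnorm] at this
    linarith
  -- the split quadratic form
  have hquadsplit : (fun q : Fin p × Fin n => Y q.1 q.2) ⬝ᵥ C⁻¹ *ᵥ (fun q : Fin p × Fin n => Y q.1 q.2)
      = (∑ i, (Uᵀ * Y) i ⬝ᵥ (A i)⁻¹ *ᵥ (Uᵀ * Y) i)
        + (σ ^ 2)⁻¹ * ((∑ i, ∑ j, Y i j ^ 2) - ∑ i, ∑ j, (Uᵀ * Y) i j ^ 2) := by
    have hinl : (∑ i : Fin m, (fun a => w (Sum.inl i, a)) ⬝ᵥ (Bf (Sum.inl i))⁻¹ *ᵥ (fun a => w (Sum.inl i, a)))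
        = ∑ i, (Uᵀ * Y) i ⬝ᵥ (A i)⁻¹ *ᵥ (Uᵀ * Y) i := by
      refine Finset.sum_congr rfl fun i _ => ?_
      rw [hwl i]
      simp only [hBf_def, Sum.elim_inl]
    have hinr : (∑ j : Fin (p - m), (fun a => w (Sum.inr j, a)) ⬝ᵥ (Bf (Sum.inr j))⁻¹ *ᵥ (fun a => w (Sum.inr j, a)))
        = (σ ^ 2)⁻¹ * ((∑ i, ∑ j, Y i j ^ 2) - ∑ i, ∑ j, (Uᵀ * Y) i j ^ 2) := by
      rw [Finset.sum_congr rfl fun j _ => hquad_inr j, ← Finset.mul_sum, hVnorm]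
    rw [hquad, Fintype.sum_sum_type, hinl, hinr]
  -- the per-component Gaussian terms
  have hMi : ∀ i, K i + (σ ^ 2 / s i + d i) • (1 : Matrix (Fin n) (Fin n) ℝ) = (s i)⁻¹ • A i := by
    intro i
    rw [hA_def, smul_add, smul_smul, smul_smul, inv_mul_cancel₀ (hs i).ne', one_smul]
    congr 2
    rw [eq_comm, inv_mul_eq_div, add_div, mul_comm (s i) (d i), mul_div_assoc,
      div_self (hs i).ne', mul_one]
  have hMinv : ∀ i, (K i + (σ ^ 2 / s i + d i) • (1 : Matrix (Fin n) (Fin n) ℝ))⁻¹ = s i • (A i)⁻¹ := by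
    intro i
    rw [hMi i]
    apply Matrix.inv_eq_right_inv
    rw [Matrix.smul_mul, Matrix.mul_smul, smul_smul,
      Matrix.mul_nonsing_inv _ (isUnit_iff_ne_zero.mpr (hdetA i).ne'),
      inv_mul_cancel₀ (hs i).ne', one_smul]
  have hMdet : ∀ i, (K i + (σ ^ 2 / s i + d i) • (1 : Matrix (Fin n) (Fin n) ℝ)).det
      = (s i)⁻¹ ^ n * (A i).det := by
    intro i
    rw [hMi i, Matrix.det_smul, Fintype.card_fin]
  have hTY : ∀ i, (T * Y) i = fun a => (Real.sqrt (s i))⁻¹ * (Uᵀ * Y) i a := by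
    intro i; funext a
    rw [hT, Matrix.mul_assoc]
    exact Matrix.diagonal_mul _ _ _ _
  have hquad_i : ∀ i, (T * Y) i ⬝ᵥ (s i • (A i)⁻¹) *ᵥ (T * Y) i
      = (Uᵀ * Y) i ⬝ᵥ (A i)⁻¹ *ᵥ (Uᵀ * Y) i := by
    intro i
    have hsne : Real.sqrt (s i) ≠ 0 := (Real.sqrt_pos.mpr (hs i)).ne'
    have hrw : (T * Y) i = (Real.sqrt (s i))⁻¹ • (Uᵀ * Y) i := by
      rw [hTY i]; rfl
    rw [hrw, Matrix.mulVec_smul, Matrix.smul_mulVec, smul_dotProduct,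
      dotProduct_smul, dotProduct_smul, smul_smul, smul_smul, smul_eq_mul]
    have hone : (Real.sqrt (s i))⁻¹ * (Real.sqrt (s i))⁻¹ * s i = 1 := by
      rw [← Real.mul_self_sqrt (hs i).le]
      field_simp
      rw [Real.sqrt_sq (Real.sqrt_nonneg _)]
    rw [hone, one_mul]
  have hgauss_i : ∀ i, gaussLogDensity ((T * Y) i)
      (K i + (σ ^ 2 / s i + d i) • (1 : Matrix (Fin n) (Fin n) ℝ))
      = -(n : ℝ) / 2 * Real.log (2 * Real.pi)
        + ((n : ℝ) / 2 * Real.log (s i) - 1 / 2 * Real.log ((A i).det))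
        - 1 / 2 * ((Uᵀ * Y) i ⬝ᵥ (A i)⁻¹ *ᵥ (Uᵀ * Y) i) := by
    intro i
    unfold gaussLogDensity
    rw [hMinv i, hMdet i, hquad_i i, Fintype.card_fin,
      Real.log_mul (pow_ne_zero _ (inv_ne_zero (hs i).ne')) (hdetA i).ne',
      Real.log_pow, Real.log_inv]
    ring
  -- log determinant facts
  have hlogdetC : Real.log C.det
      = (∑ i, Real.log ((A i).det)) + ((p : ℝ) - (m : ℝ)) * ((n : ℝ) * Real.log (σ ^ 2)) := by
    rw [hdetC, Real.log_mul (Finset.prod_ne_zero_iff.mpr fun i _ => (hdetA i).ne')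
      (pow_ne_zero _ (pow_ne_zero _ (pow_ne_zero 2 hσ.ne'))), Real.log_prod fun i _ => (hdetA i).ne',
      Real.log_pow, Real.log_pow, ← Nat.cast_sub hmp]
    try push_cast
    try ring
  have hlogdetS : Real.log (Matrix.diagonal s).det = ∑ i, Real.log (s i) := by
    rw [Matrix.det_diagonal, Real.log_prod fun i _ => (hs i).ne']
  have hlog2pis : Real.log (2 * Real.pi * σ ^ 2) = Real.log (2 * Real.pi) + Real.log (σ ^ 2) :=
    Real.log_mul (by positivity) (pow_ne_zero 2 hσ.ne')
  -- assembling everything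
  have hsum : ∑ i, gaussLogDensity ((T * Y) i)
      (K i + (σ ^ 2 / s i + d i) • (1 : Matrix (Fin n) (Fin n) ℝ))
      = (m : ℝ) * (-(n : ℝ) / 2 * Real.log (2 * Real.pi))
        + ((n : ℝ) / 2 * (∑ i, Real.log (s i)) - 1 / 2 * (∑ i, Real.log ((A i).det)))
        - 1 / 2 * (∑ i, (Uᵀ * Y) i ⬝ᵥ (A i)⁻¹ *ᵥ (Uᵀ * Y) i) := by
    rw [Finset.sum_congr rfl fun i _ => hgauss_i i]
    simp only [Finset.sum_add_distrib, Finset.sum_sub_distrib, Finset.sum_const,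
      Finset.card_univ, Fintype.card_fin, nsmul_eq_mul, ← Finset.mul_sum]
    try ring
  rw [hsum]
  unfold gaussLogDensity
  rw [hquadsplit, hlogdetC, hlogdetS, hlog2pis, Fintype.card_prod, Fintype.card_fin,
    Fintype.card_fin]
  push_cast
  field_simp
  ring
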